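/- Let f : ℂ → ℂ be a nonconstant entire (everywhere analytic) surjective function. For n ≥ 1 and y ∈ ℂ, let D(n, y) ∈ ℕ denote the local degree of the n-th iterate f^[n] at y, i.e., the order of vanishing of z ↦ f^[n](z) − f^[n](y) at y (a finite positive natural number since f^[n] is nonconstant). Suppose ν : ℂ → ℕ satisfies, for every x ∈ ℂ: (i) D(n, y) divides ν(x) whenever n ≥ 1 and f^[n](y) = x, and (ii) for every m ∈ ℕ, if D(n, y) divides m whenever n ≥ 1 and f^[n](y) = x, then ν(x) divides m. Then for every x ∈ ℂ, D(1, x)·ν(x) divides ν(f(x)). -/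

import Mathlib

/-!
Since `f^[n+1] = f ∘ f^[n]`, the composition formula for analytic orders makes local
degrees multiplicative along orbits: `D (n+1) y = D 1 (f^[n] y) * D n y`. So for every `y`
with `f^[n] y = x`, `D 1 x * D n y = D (n+1) y` divides `ν (f x)`; thus every such `D n y`
divides `ν (f x) / D 1 x`, and the minimality of `ν x` gives `ν x ∣ ν (f x) / D 1 x`.
-/

variable {𝕜 : Type*} [NontriviallyNormedField 𝕜] {f : 𝕜 → 𝕜}

theorem analyticAt_iterate (hf : ∀ z, AnalyticAt 𝕜 f z) (n : ℕ) (z : 𝕜) :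
    AnalyticAt 𝕜 f^[n] z := by
  induction n generalizing z with
  | zero => exact analyticAt_id
  | succ n ih =>
    rw [Function.iterate_succ']
    exact (hf _).comp (ih z)

theorem analyticOrderAt_iterate_succ_sub (hf : ∀ z, AnalyticAt 𝕜 f z) (n : ℕ) (y : 𝕜) :
    analyticOrderAt (fun z => f^[n + 1] z - f^[n + 1] y) y =
      analyticOrderAt (fun z => f z - f (f^[n] y)) (f^[n] y) *
        analyticOrderAt (fun z => f^[n] z - f^[n] y) y := by
  have hcomp : (fun z => f^[n + 1] z - f^[n + 1] y) =
      (fun w => f w - f (f^[n] y)) ∘ f^[n] := by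
    ext z
    simp only [Function.comp_apply, Function.iterate_succ_apply']
  rw [hcomp]
  exact ((hf _).sub analyticAt_const).analyticOrderAt_comp (analyticAt_iterate hf n y)

theorem degree_mul_nu_dvd_nu_image_general
    (f : ℂ → ℂ) (hf : ∀ z, AnalyticAt ℂ f z)
    (D : ℕ → ℂ → ℕ)
    (hD : ∀ n : ℕ, 1 ≤ n → ∀ y : ℂ,
      ∀ h : AnalyticAt ℂ (fun z => f^[n] z - f^[n] y) y,
        analyticOrderAt (fun z => f^[n] z - f^[n] y) y = (D n y : ℕ∞))
    (ν : ℂ → ℕ)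
    (hν₁ : ∀ x : ℂ, ∀ n : ℕ, 1 ≤ n → ∀ y : ℂ, f^[n] y = x → D n y ∣ ν x)
    (hν₂ : ∀ x : ℂ, ∀ m : ℕ,
      (∀ n : ℕ, 1 ≤ n → ∀ y : ℂ, f^[n] y = x → D n y ∣ m) → ν x ∣ m) :
    ∀ x : ℂ, D 1 x * ν x ∣ ν (f x) := by
  have hD' (n : ℕ) (hn : 1 ≤ n) (y : ℂ) :=
    hD n hn y ((analyticAt_iterate hf n y).sub analyticAt_const)
  have degree_succ (n : ℕ) (hn : 1 ≤ n) (y : ℂ) : D (n + 1) y = D 1 (f^[n] y) * D n y := by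
    have h1 := hD' 1 le_rfl (f^[n] y)
    simp only [Function.iterate_one] at h1
    have h := analyticOrderAt_iterate_succ_sub hf n y
    rw [hD' (n + 1) (by omega), hD' n hn, h1] at h
    exact_mod_cast h
  intro x
  have hx : D 1 x ∣ ν (f x) := hν₁ (f x) 1 le_rfl x rfl
  rw [← Nat.dvd_div_iff_mul_dvd hx]
  refine hν₂ x _ fun n hn y hy => ?_
  rw [Nat.dvd_div_iff_mul_dvd hx, ← hy, ← degree_succ n hn y]
  exact hν₁ _ (n + 1) (by omega) y (Function.iterate_succ_apply' f n y)

/-- Lemma 2.1 of the paper, for entire self-maps of `ℂ`: if `f` is a nonconstant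
entire surjective function, `D n y` is the local degree of `f^[n]` at `y`
(the order of vanishing of `z ↦ f^[n] z - f^[n] y` at `y`), and `ν : ℂ → ℕ`
is the lcm (in the divisibility order) of the local degrees `D n y` over all
`n ≥ 1` and `y` with `f^[n] y = x`, then `D 1 x * ν x` divides `ν (f x)`. -/
theorem degree_mul_nu_dvd_nu_image
    (f : ℂ → ℂ) (hf : ∀ z, AnalyticAt ℂ f z)
    (hnc : ¬ ∃ c : ℂ, ∀ z, f z = c)
    (hsurj : Function.Surjective f)
    (D : ℕ → ℂ → ℕ)
    (hD : ∀ n : ℕ, 1 ≤ n → ∀ y : ℂ,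
      ∀ h : AnalyticAt ℂ (fun z => f^[n] z - f^[n] y) y,
        analyticOrderAt (fun z => f^[n] z - f^[n] y) y = (D n y : ℕ∞))
    (ν : ℂ → ℕ)
    (hν₁ : ∀ x : ℂ, ∀ n : ℕ, 1 ≤ n → ∀ y : ℂ, f^[n] y = x → D n y ∣ ν x)
    (hν₂ : ∀ x : ℂ, ∀ m : ℕ,
      (∀ n : ℕ, 1 ≤ n → ∀ y : ℂ, f^[n] y = x → D n y ∣ m) → ν x ∣ m) :
    ∀ x : ℂ, D 1 x * ν x ∣ ν (f x) :=
  degree_mul_nu_dvd_nu_image_general f hf D hD ν hν₁ hν₂
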